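/- Assume the evidence has a N(θ,σ²) distribution with σ > 0 known, the prior is N(μ,τ²), and α = P(H_p) > 0.5, so the quantile restriction gives μ = θ0 − cτ with c = Φ^{−1}(1−α) < 0. Then there exists x0 < θ0 such that for every x ∈ [x0, θ0], the marginal likelihood g_τ(x) = (1/√(σ²+τ²))·φ((x−θ0+cτ)/√(σ²+τ²)) satisfies g_τ(x) < g_0(x) for all τ > 0 (so the maximum likelihood estimate of τ is 0 and the resulting strength of evidence equals one on [x0, θ0]). -/

import Mathlib

/-- The standard normal density. -/
noncomputable def stdNormalPDF (t : ℝ) : ℝ := Real.exp (-t ^ 2 / 2) / Real.sqrt (2 * Real.pi)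

/-- The standard normal cumulative distribution function. -/
noncomputable def stdNormalCDF (y : ℝ) : ℝ := ∫ t in Set.Iic y, stdNormalPDF t

/-!
Write `d = x - θ0`. Since `Φ(0) = 1/2`, `α > 1/2` forces `c < 0`, so on `[θ0 + cσ, θ0]` we have
`cσ ≤ d ≤ 0`, and then `(d + cτ)² σ² - d² (σ² + τ²) = τ (2 c d σ² + τ (c² σ² - d²)) ≥ 0`: the
standardized residual of `g_τ` is at least as large in absolute value as that of `g_0`, so its
density value is no larger, while its normalizing factor `1 / √(σ² + τ²)` is strictly smaller
than `1 / σ`.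
-/

open MeasureTheory ProbabilityTheory Real Set

lemma stdNormalPDF_eq_gaussianPDFReal : stdNormalPDF = gaussianPDFReal 0 1 := by
  ext t
  simp [stdNormalPDF, gaussianPDFReal, div_eq_inv_mul]

lemma stdNormalPDF_pos (t : ℝ) : 0 < stdNormalPDF t := by
  unfold stdNormalPDF
  positivity

lemma stdNormalPDF_neg (t : ℝ) : stdNormalPDF (-t) = stdNormalPDF t := by
  simp [stdNormalPDF]

lemma stdNormalPDF_le_of_sq_le {a b : ℝ} (h : a ^ 2 ≤ b ^ 2) :
    stdNormalPDF b ≤ stdNormalPDF a := by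
  unfold stdNormalPDF
  gcongr

lemma integrable_stdNormalPDF : Integrable stdNormalPDF :=
  stdNormalPDF_eq_gaussianPDFReal ▸ integrable_gaussianPDFReal 0 1

lemma stdNormalCDF_zero : stdNormalCDF 0 = 1 / 2 := by
  have htotal : stdNormalCDF 0 + ∫ t in Ioi 0, stdNormalPDF t = 1 := by
    rw [stdNormalCDF, intervalIntegral.integral_Iic_add_Ioi integrable_stdNormalPDF.integrableOn
      integrable_stdNormalPDF.integrableOn, stdNormalPDF_eq_gaussianPDFReal,
      integral_gaussianPDFReal_eq_one 0 one_ne_zero]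
  have hsymm : stdNormalCDF 0 = ∫ t in Ioi 0, stdNormalPDF t := by
    simpa [stdNormalCDF, stdNormalPDF_neg] using integral_comp_neg_Iic (0 : ℝ) stdNormalPDF
  linarith

lemma stdNormalCDF_monotone : Monotone stdNormalCDF := fun _ _ hab =>
  setIntegral_mono_set integrable_stdNormalPDF.integrableOn
    (ae_of_all _ fun t => (stdNormalPDF_pos t).le) (Iic_subset_Iic.mpr hab).eventuallyLE

lemma neg_of_stdNormalCDF_lt_half {c : ℝ} (h : stdNormalCDF c < 1 / 2) : c < 0 := by
  by_contra! hc
  linarith [stdNormalCDF_monotone hc, stdNormalCDF_zero]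

lemma sq_div_le_sq_add_mul_div_sqrt {σ τ c d : ℝ} (hσ : 0 < σ) (hτ : 0 ≤ τ)
    (hcd : c * σ ≤ d) (hd : d ≤ 0) :
    (d / σ) ^ 2 ≤ ((d + c * τ) / √(σ ^ 2 + τ ^ 2)) ^ 2 := by
  have hcd_nonneg : 0 ≤ c * d := by nlinarith
  have hd_sq : d ^ 2 ≤ c ^ 2 * σ ^ 2 := by nlinarith
  rw [div_pow, div_pow, sq_sqrt (by positivity), div_le_div_iff₀ (by positivity) (by positivity)]
  nlinarith [mul_nonneg (mul_nonneg hcd_nonneg hτ) (sq_nonneg σ),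
    mul_le_mul_of_nonneg_right hd_sq (sq_nonneg τ)]

lemma one_div_mul_stdNormalPDF_lt {σ s a b : ℝ} (hσ : 0 < σ) (hσs : σ < s)
    (hab : a ^ 2 ≤ b ^ 2) :
    1 / s * stdNormalPDF b < 1 / σ * stdNormalPDF a := by
  have hs : 0 < s := hσ.trans hσs
  calc 1 / s * stdNormalPDF b ≤ 1 / s * stdNormalPDF a := by
        gcongr
        exact stdNormalPDF_le_of_sq_le hab
    _ < 1 / σ * stdNormalPDF a := by
        gcongr
        exact stdNormalPDF_pos a

/-- In the unbalanced case `α = P(H_p) > 1/2` (so `c = Φ⁻¹(1−α) < 0` and the quantile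
restriction gives `μ = θ0 − cτ`), there is an `x0 < θ0` such that for all evidence
values `x ∈ [x0, θ0]` the marginal likelihood `g_τ(x)` is strictly below `g_0(x)` for
every `τ > 0`; hence the maximum likelihood estimate of `τ` is `0` and the strength of
evidence equals one on `[x0, θ0]`. -/
theorem unbalanced_flat_part
    (σ θ0 α c : ℝ) (hσ : 0 < σ) (hα : 1 / 2 < α)
    (hc : stdNormalCDF c = 1 - α) :
    ∃ x0 : ℝ, x0 < θ0 ∧ ∀ x ∈ Set.Icc x0 θ0, ∀ τ : ℝ, 0 < τ →
      (1 / Real.sqrt (σ ^ 2 + τ ^ 2))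
          * stdNormalPDF ((x - θ0 + c * τ) / Real.sqrt (σ ^ 2 + τ ^ 2))
        < (1 / σ) * stdNormalPDF ((x - θ0) / σ) := by
  have hc0 : c < 0 := neg_of_stdNormalCDF_lt_half (by linarith)
  refine ⟨θ0 + c * σ, by nlinarith, fun x ⟨hx0, hxθ⟩ τ hτ => ?_⟩
  have hσs : σ < √(σ ^ 2 + τ ^ 2) := (lt_sqrt hσ.le).mpr (by nlinarith)
  exact one_div_mul_stdNormalPDF_lt hσ hσs
    (sq_div_le_sq_add_mul_div_sqrt hσ hτ.le (by linarith) (by linarith))
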